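/- Let L/K be an abelian extension of number fields, and x ∈ L an algebraic integer with L = K(x) such that all Galois conjugates of x are real. Let a, b be nonzero integers with |a/b| > 2. Then there exists a positive integer m such that (a x + b)^m is completely normal in L/K. -/

import Mathlib

noncomputable section

/-- `x` is a normal element of `L/K`: its Galois conjugates form a `K`-basis of `L`. -/
def IsNormalElement (K : Type*) {L : Type*} [Field K] [Field L] [Algebra K L] (x : L) : Prop :=
  Submodule.span K (Set.range fun γ : L ≃ₐ[K] L => γ x) = ⊤ ∧
    LinearIndependent K fun γ : L ≃ₐ[K] L => γ x

/-- `x` is completely normal in `L/K`: it is normal over every intermediate field. -/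
def IsCompletelyNormal (K : Type*) {L : Type*} [Field K] [Field L] [Algebra K L] (x : L) : Prop :=
  ∀ F : IntermediateField K L, IsNormalElement F x

/-!
Put `z = a x + b`. Its conjugates `ι (γ z)` are nonzero reals of pairwise distinct absolute
values: `γ z = 0` or `γ z = -δ z` would make `-b/a` or `-2b/a` an algebraic integer, and
`γ z = δ z` forces `γ = δ` because `x` generates `L`. So for `m` large every `|ι (γ z)| ^ m`
exceeds the sum of the smaller ones. Over an intermediate field `F`, the group matrix
`(ι (σ⁻¹ γ y))` of `y = z ^ m` on the abelian group `Gal(L/F)` has the characters `χ` as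
eigenvectors, with eigenvalues `∑ χ h * ι (h y)`; the dominant term keeps these nonzero, so the
matrix is invertible, and a linear relation over `F` among the conjugates of `y` would give a
vector in its kernel.
-/

open Finset Filter Function Topology Matrix

section Superincreasing

variable {ι κ : Type*} [Fintype ι] [Fintype κ]

def Superincreasing (t : ι → ℝ) : Prop :=
  ∀ i, ∑ j with t j < t i, t j < t i

theorem Superincreasing.comp {t : ι → ℝ} (ht : Superincreasing t) (ht0 : ∀ i, 0 ≤ t i)
    {g : κ → ι} (hg : Injective g) : Superincreasing fun k => t (g k) := by
  intro k
  calc ∑ j with t (g j) < t (g k), t (g j)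
      = ∑ i ∈ (univ.filter fun j => t (g j) < t (g k)).map ⟨g, hg⟩, t i := by
        rw [sum_map]; rfl
    _ ≤ ∑ i with t i < t (g k), t i := by
        refine sum_le_sum_of_subset_of_nonneg ?_ fun i _ _ => ht0 i
        intro i hi
        obtain ⟨j, hj, rfl⟩ := Finset.mem_map.1 hi
        exact mem_filter.2 ⟨mem_univ _, (mem_filter.1 hj).2⟩
    _ < t (g k) := ht (g k)

theorem eventually_superincreasing_pow {t : ι → ℝ} (ht : ∀ i, 0 < t i) :
    ∀ᶠ m : ℕ in atTop, Superincreasing fun i => t i ^ m := by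
  refine eventually_all.2 fun i => ?_
  have hlim : Tendsto (fun m : ℕ => ∑ j with t j < t i, (t j / t i) ^ m) atTop (𝓝 0) := by
    simpa using tendsto_finsetSum _ fun j hj =>
      tendsto_pow_atTop_nhds_zero_of_lt_one (div_nonneg (ht j).le (ht i).le)
        ((div_lt_one (ht i)).2 (mem_filter.1 hj).2)
  filter_upwards [hlim.eventually (gt_mem_nhds one_pos), eventually_ne_atTop 0] with m hm hm0
  have hfilter : (univ.filter fun j => t j ^ m < t i ^ m) = univ.filter fun j => t j < t i := by
    ext j
    simp [pow_lt_pow_iff_left₀ (ht j).le (ht i).le hm0]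
  calc ∑ j with t j ^ m < t i ^ m, t j ^ m
      = t i ^ m * ∑ j with t j < t i, (t j / t i) ^ m := by
        rw [hfilter, mul_sum]
        exact sum_congr rfl fun j _ => by
          rw [div_pow, mul_div_cancel₀ _ (pow_ne_zero _ (ht i).ne')]
    _ < t i ^ m * 1 := mul_lt_mul_of_pos_left hm (pow_pos (ht i) m)
    _ = t i ^ m := mul_one _

theorem Superincreasing.sum_ne_zero {E : Type*} [SeminormedAddCommGroup E] [Nonempty ι]
    {c : ι → E} (hc : Superincreasing fun i => ‖c i‖) (hinj : Injective fun i => ‖c i‖) :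
    ∑ i, c i ≠ 0 := by
  classical
  obtain ⟨i, -, hi⟩ := exists_max_image univ (fun i => ‖c i‖) univ_nonempty
  have hrest : ∑ j ∈ univ.erase i, ‖c j‖ < ‖c i‖ := by
    refine lt_of_le_of_lt (sum_le_sum_of_subset_of_nonneg ?_ fun _ _ _ => norm_nonneg _) (hc i)
    intro j hj
    exact mem_filter.2 ⟨mem_univ _,
      (hi j (mem_univ j)).lt_of_ne (hinj.ne (ne_of_mem_erase hj))⟩
  intro h0
  rw [← add_sum_erase univ c (mem_univ i), add_eq_zero_iff_eq_neg] at h0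
  have := norm_sum_le (univ.erase i) c
  rw [← norm_neg, ← h0] at this
  linarith

end Superincreasing

section GroupMatrix

variable {G R : Type*} [Fintype G]

theorem groupMatrix_mulVec_monoidHom [Group G] [CommSemiring R] (f : G → R) (χ : G →* R) :
    (Matrix.of fun σ γ : G => f (σ⁻¹ * γ)) *ᵥ ⇑χ = (∑ h, χ h * f h) • ⇑χ := by
  ext σ
  calc ∑ γ, f (σ⁻¹ * γ) * χ γ = ∑ h, f h * χ (σ * h) :=
        Fintype.sum_equiv (Equiv.mulLeft σ⁻¹) _ _ fun γ => by simp
    _ = (∑ h, χ h * f h) * χ σ := by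
        rw [sum_mul]
        exact sum_congr rfl fun h _ => by rw [map_mul]; ring

theorem injective_groupMatrix_mulVec [CommGroup G] [Field R]
    [HasEnoughRootsOfUnity R (Monoid.exponent G)] (f : G → R)
    (hf : ∀ χ : G →* Rˣ, ∑ h, (χ h : R) * f h ≠ 0) :
    Injective (Matrix.of fun σ γ : G => f (σ⁻¹ * γ)).mulVec := by
  set B := Matrix.of fun σ γ : G => f (σ⁻¹ * γ)
  have := Fintype.ofFinite (G →* Rˣ)
  let coeχ : (G →* Rˣ) → G → R := fun χ => ⇑((Units.coeHom R).comp χ)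
  have hspan : Submodule.span R (Set.range coeχ) = ⊤ := by
    refine LinearIndependent.span_eq_top_of_card_eq_finrank' ?_ ?_
    · exact (linearIndependent_monoidHom G R).comp _ fun χ χ' h =>
        MonoidHom.ext fun g => Units.ext (DFunLike.congr_fun h g)
    · rw [Module.finrank_fintype_fun_eq_card, Fintype.card_eq_nat_card, Fintype.card_eq_nat_card,
        CommGroup.card_monoidHom_of_hasEnoughRootsOfUnity]
  have hsurj : Surjective B.mulVecLin := by
    rw [← LinearMap.range_eq_top, eq_top_iff, ← hspan, Submodule.span_le]
    rintro _ ⟨χ, rfl⟩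
    refine ⟨(∑ h, (χ h : R) * f h)⁻¹ • coeχ χ, ?_⟩
    rw [mulVecLin_apply, mulVec_smul, groupMatrix_mulVec_monoidHom, smul_smul]
    convert one_smul R (coeχ χ)
    exact inv_mul_cancel₀ (hf χ)
  exact LinearMap.injective_iff_surjective.mpr hsurj

end GroupMatrix

section Galois

variable {K L F : Type*} [Field K] [Field L] [Algebra K L] [Field F] [Algebra F L]

theorem linearIndependent_algEquiv_apply_of_injective_groupMatrix [FiniteDimensional F L]
    {R : Type*} [Field R] (ι : L →+* R) {y : L}
    (hB : Injective (Matrix.of fun σ γ : L ≃ₐ[F] L => ι ((σ⁻¹ * γ) y)).mulVec) :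
    LinearIndependent F fun γ : L ≃ₐ[F] L => γ y := by
  rw [Fintype.linearIndependent_iff]
  intro c hc γ
  have hzero : (fun γ => ι (algebraMap F L (c γ))) = 0 := hB <| by
    rw [mulVec_zero]
    ext σ
    calc ∑ γ, ι ((σ⁻¹ * γ) y) * ι (algebraMap F L (c γ))
        = ι (σ⁻¹ (∑ γ, c γ • γ y)) := by
          simp only [map_sum, Algebra.smul_def, map_mul, AlgEquiv.mul_apply,
            AlgEquiv.commutes, mul_comm]
      _ = 0 := by rw [hc, map_zero, map_zero]
  simpa only [Pi.zero_apply, map_eq_zero] using congr_fun hzero γ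

theorem isNormalElement_of_linearIndependent [FiniteDimensional F L] [IsGalois F L] {y : L}
    (h : LinearIndependent F fun γ : L ≃ₐ[F] L => γ y) : IsNormalElement F y :=
  ⟨h.span_eq_top_of_card_eq_finrank' (by
    rw [← Nat.card_eq_fintype_card, IsGalois.card_aut_eq_finrank]), h⟩

theorem isNormalElement_of_superincreasing [FiniteDimensional F L] [IsGalois F L]
    (hcomm : ∀ γ δ : L ≃ₐ[F] L, γ * δ = δ * γ) (ι : L →+* ℂ) {y : L}
    (hsup : Superincreasing fun γ : L ≃ₐ[F] L => ‖ι (γ y)‖)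
    (hinj : Injective fun γ : L ≃ₐ[F] L => ‖ι (γ y)‖) : IsNormalElement F y := by
  let _ : CommGroup (L ≃ₐ[F] L) :=
    { (inferInstance : Group (L ≃ₐ[F] L)) with mul_comm := hcomm }
  have : NeZero (Monoid.exponent (L ≃ₐ[F] L)) := ⟨Monoid.exponent_ne_zero_of_finite⟩
  have hB : Injective (Matrix.of fun σ γ : L ≃ₐ[F] L => ι ((σ⁻¹ * γ) y)).mulVec := by
    refine injective_groupMatrix_mulVec (fun h : L ≃ₐ[F] L => ι (h y)) fun χ => ?_
    have hχ : ∀ h, ‖(χ h : ℂ)‖ = 1 := fun h =>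
      Complex.norm_eq_one_of_pow_eq_one (n := Fintype.card (L ≃ₐ[F] L))
        (by rw [← Units.val_pow_eq_pow_val, ← map_pow, pow_card_eq_one, map_one, Units.val_one])
        Fintype.card_ne_zero
    have hnorm : (fun h => ‖(χ h : ℂ) * ι (h y)‖) = fun h => ‖ι (h y)‖ := by
      ext h
      rw [norm_mul, hχ, one_mul]
    exact Superincreasing.sum_ne_zero (hnorm ▸ hsup) (hnorm ▸ hinj)
  exact isNormalElement_of_linearIndependent
    (linearIndependent_algEquiv_apply_of_injective_groupMatrix ι hB)

theorem isCompletelyNormal_of_superincreasing [FiniteDimensional K L] [IsGalois K L]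
    (hcomm : ∀ γ δ : L ≃ₐ[K] L, γ * δ = δ * γ) (ι : L →+* ℂ) {y : L}
    (hsup : Superincreasing fun γ : L ≃ₐ[K] L => ‖ι (γ y)‖)
    (hinj : Injective fun γ : L ≃ₐ[K] L => ‖ι (γ y)‖) : IsCompletelyNormal K y := by
  intro E
  have hρ : Injective (AlgEquiv.restrictScalars K : (L ≃ₐ[E] L) → L ≃ₐ[K] L) :=
    AlgEquiv.restrictScalars_injective K
  have hcommE (γ δ : L ≃ₐ[E] L) : γ * δ = δ * γ :=
    hρ (AlgEquiv.ext (AlgEquiv.congr_fun (hcomm (γ.restrictScalars K) (δ.restrictScalars K))))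
  have hsupE := hsup.comp (fun _ => norm_nonneg _) hρ
  exact isNormalElement_of_superincreasing hcommE ι hsupE (hinj.comp hρ)

end Galois

theorem intCast_mul_add_ne_zero_of_isIntegral {L : Type*} [Field L] [CharZero L] {a c : ℤ}
    {u : L} (hu : IsIntegral ℤ u) (hc : c ≠ 0) (hca : |c| < |a|) : (a : L) * u + c ≠ 0 := by
  intro h
  have ha : (a : ℚ) ≠ 0 := Int.cast_ne_zero.2 (abs_pos.1 ((abs_nonneg c).trans_lt hca))
  have hu' : u = algebraMap ℚ L (-c / a) := by
    rw [map_div₀, map_neg, map_intCast, map_intCast, eq_div_iff (by exact_mod_cast ha)]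
    linear_combination h
  obtain ⟨n, hn⟩ := IsIntegrallyClosed.isIntegral_iff.mp
    ((isIntegral_algebraMap_iff (algebraMap ℚ L).injective).mp (hu' ▸ hu))
  have hdvd : a ∣ c := ⟨-n, by
    rw [algebraMap_int_eq, eq_intCast, eq_div_iff ha] at hn
    exact_mod_cast (by linear_combination hn : (c : ℚ) = a * -n)⟩
  exact hc (Int.eq_zero_of_abs_lt_dvd ((abs_dvd a c).2 hdvd) hca)

theorem Complex.eq_or_eq_neg_of_norm_eq {w v : ℂ} (hw : w.im = 0) (hv : v.im = 0)
    (h : ‖w‖ = ‖v‖) : w = v ∨ w = -v := by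
  rw [← abs_re_eq_norm.2 hw, ← abs_re_eq_norm.2 hv] at h
  rcases abs_eq_abs.1 h with h | h
  · exact .inl (Complex.ext h (hw.trans hv.symm))
  · exact .inr (Complex.ext (by simpa using h) (by simp [hw, hv]))

theorem AlgEquiv.eq_of_apply_eq_of_adjoin_eq_top {K L : Type*} [Field K] [Field L] [Algebra K L]
    [Algebra.IsAlgebraic K L] {x : L} (hx : IntermediateField.adjoin K {x} = ⊤)
    {γ δ : L ≃ₐ[K] L} (h : γ x = δ x) : γ = δ :=
  AlgEquiv.coe_toAlgHom_injective <| AlgHom.ext_of_adjoin_eq_top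
    ((IntermediateField.adjoin_simple_eq_top_iff_of_isAlgebraic
      (Algebra.IsAlgebraic.isAlgebraic x)).1 hx) (by simpa using h)

theorem injective_norm_apply_intCast_mul_add {K L : Type*} [Field K] [Field L] [Algebra K L]
    [Algebra.IsAlgebraic K L] (ι : L →+* ℂ) {x : L} (hint : IsIntegral ℤ x)
    (hgen : IntermediateField.adjoin K {x} = ⊤)
    (hreal : ∀ γ : L ≃ₐ[K] L, (ι (γ x)).im = 0) {a b : ℤ} (hb : b ≠ 0)
    (habs : 2 * |b| < |a|) :
    Injective fun γ : L ≃ₐ[K] L => ‖ι (γ (a * x + b))‖ := by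
  have : CharZero L := ι.charZero
  have hre (γ : L ≃ₐ[K] L) : (ι (γ (a * x + b))).im = 0 := by simp [hreal γ]
  have hconj (γ : L ≃ₐ[K] L) : IsIntegral ℤ (γ x) :=
    hint.map (γ.toAlgHom.restrictScalars ℤ)
  intro γ δ h
  rcases Complex.eq_or_eq_neg_of_norm_eq (hre γ) (hre δ) h with h | h
  · refine AlgEquiv.eq_of_apply_eq_of_adjoin_eq_top hgen ?_
    have ha : (a : L) ≠ 0 := Int.cast_ne_zero.2 (abs_pos.1 (by linarith [abs_nonneg b]))
    simpa [ha] using ι.injective h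
  · have hsum : (a : L) * (γ x + δ x) + ((2 * b : ℤ) : L) = 0 := by
      have := ι.injective (h.trans (map_neg ι _).symm)
      simp only [map_add, map_mul, map_intCast] at this
      push_cast
      linear_combination this
    exact (intCast_mul_add_ne_zero_of_isIntegral ((hconj γ).add (hconj δ))
      (mul_ne_zero two_ne_zero hb) (by rwa [abs_mul, abs_two]) hsum).elim

theorem exists_pow_completelyNormal_general
    {K L : Type*} [Field K] [NumberField K] [Field L] [NumberField L]
    [Algebra K L] [IsGalois K L]
    (hab : ∀ γ δ : L ≃ₐ[K] L, γ * δ = δ * γ)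
    (ι : L →+* ℂ)
    (x : L) (hint : IsIntegral ℤ x)
    (hgen : IntermediateField.adjoin K {x} = ⊤)
    (hreal : ∀ γ : L ≃ₐ[K] L, (ι (γ x)).im = 0)
    (a b : ℤ) (hb : b ≠ 0) (habs : 2 * |b| < |a|) :
    ∃ m : ℕ, 0 < m ∧ IsCompletelyNormal K (((a : L) * x + (b : L)) ^ m) := by
  set z : L := (a : L) * x + b
  have hpos (γ : L ≃ₐ[K] L) : 0 < ‖ι (γ z)‖ :=
    norm_pos_iff.2 <| (map_ne_zero ι).2 <| (map_ne_zero γ).2 <|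
      intCast_mul_add_ne_zero_of_isIntegral hint hb (by linarith [abs_nonneg b])
  obtain ⟨m, hsup, hm⟩ :=
    ((eventually_superincreasing_pow hpos).and (eventually_gt_atTop 0)).exists
  have hnorm :
      (fun γ : L ≃ₐ[K] L => ‖ι (γ (z ^ m))‖) = fun γ => ‖ι (γ z)‖ ^ m := by
    ext γ
    rw [map_pow, map_pow, norm_pow]
  have hinj : Injective fun γ : L ≃ₐ[K] L => ‖ι (γ z)‖ ^ m := fun γ δ h =>
    injective_norm_apply_intCast_mul_add ι hint hgen hreal hb habs <|
      (pow_left_inj₀ (norm_nonneg _) (norm_nonneg _) hm.ne').1 h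
  exact ⟨m, hm, isCompletelyNormal_of_superincreasing hab ι (hnorm ▸ hsup) (hnorm ▸ hinj)⟩

theorem exists_pow_completelyNormal
    {K L : Type*} [Field K] [NumberField K] [Field L] [NumberField L]
    [Algebra K L] [IsGalois K L]
    (hab : ∀ γ δ : L ≃ₐ[K] L, γ * δ = δ * γ)
    (ι : L →+* ℂ)
    (x : L) (hint : IsIntegral ℤ x)
    (hgen : IntermediateField.adjoin K {x} = ⊤)
    (hreal : ∀ γ : L ≃ₐ[K] L, (ι (γ x)).im = 0)
    (a b : ℤ) (ha : a ≠ 0) (hb : b ≠ 0) (habs : 2 * |b| < |a|) :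
    ∃ m : ℕ, 0 < m ∧ IsCompletelyNormal K (((a : L) * x + (b : L)) ^ m) :=
  exists_pow_completelyNormal_general hab ι x hint hgen hreal a b hb habs
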